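/- arXiv:1806.03022 — 7 statements merged into one kernel-verified Lean document; each statement's English description precedes it below -/
import Mathlib

section
/- For every positive integer n and all complex numbers s and x, one has ∑_{k=0}^{n} C(s+n, k) · x^k = (1+x)^n + s · ∑_{k=0}^{n-1} (C(s+k, k)/(k+1)) · x^{k+1} · (1+x)^{n-k-1}. (This is the denominator-cleared form of the paper's identity ∑_{k=0}^{n} C(s+n,k) x^k = (1+x)^n [1 + s ∑_{k=0}^{n-1} (C(s+k,k)/(k+1)) (x/(x+1))^{k+1}].) -/
noncomputable def genChoose (s : ℂ) (k : ℕ) : ℂ :=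
  (∏ i ∈ Finset.range k, (s - i)) / (Nat.factorial k)

noncomputable def Hc (n : ℕ) : ℂ := ∑ i ∈ Finset.range n, 1 / (i + 1)

noncomputable def H2c (n : ℕ) : ℂ := ∑ i ∈ Finset.range n, 1 / ((i : ℂ) + 1) ^ 2

/-! Both sides satisfy `F (n + 1) = (1 + x) F n + s C(s+n,n)/(n+1) x^(n+1)` with `F 0 = 1`: on the
left this is Pascal's rule summed against `x^k`, on the right it is Horner's scheme for the
powers of `1 + x`. -/

open Finset

lemma genChoose_zero_right (t : ℂ) : genChoose t 0 = 1 := by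
  simp [genChoose]

lemma genChoose_succ_right (t : ℂ) (k : ℕ) :
    genChoose t (k + 1) = genChoose t k * (t - k) / (k + 1) := by
  simp only [genChoose, prod_range_succ, Nat.factorial_succ, Nat.cast_mul, Nat.cast_succ]
  field_simp

lemma genChoose_succ_succ (t : ℂ) (k : ℕ) :
    genChoose (t + 1) (k + 1) = genChoose t k + genChoose t (k + 1) := by
  induction k with
  | zero => simp [genChoose_succ_right, genChoose_zero_right, add_comm]
  | succ k ih =>
    have hk₁ : (k : ℂ) + 1 ≠ 0 := Nat.cast_add_one_ne_zero k
    have hk₂ : (k : ℂ) + 1 + 1 ≠ 0 := by exact_mod_cast Nat.succ_ne_zero (k + 1)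
    rw [genChoose_succ_right (t + 1), ih, genChoose_succ_right t (k + 1),
      genChoose_succ_right t k]
    push_cast
    field_simp
    ring

lemma genChoose_add_natCast_succ (s : ℂ) (n : ℕ) :
    genChoose (s + n) (n + 1) = s * genChoose (s + n) n / (n + 1) := by
  rw [genChoose_succ_right, add_sub_cancel_right, mul_comm s]

lemma sum_range_succ_genChoose_add_one_mul_pow (t x : ℂ) (m : ℕ) :
    ∑ k ∈ range (m + 1), genChoose (t + 1) k * x ^ k =
      (1 + x) * ∑ k ∈ range m, genChoose t k * x ^ k + genChoose t m * x ^ m := by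
  induction m with
  | zero => simp [genChoose_zero_right]
  | succ m ih =>
    rw [sum_range_succ, ih, genChoose_succ_succ, sum_range_succ]
    ring

lemma sum_range_succ_mul_pow_sub_one {R : Type*} [CommSemiring R] (f : ℕ → R) (y : R) (n : ℕ) :
    ∑ k ∈ range (n + 1), f k * y ^ (n + 1 - k - 1) =
      y * ∑ k ∈ range n, f k * y ^ (n - k - 1) + f n := by
  rw [sum_range_succ, Nat.add_sub_cancel_left, Nat.sub_self, pow_zero, mul_one, mul_sum]
  congr 1
  refine sum_congr rfl fun k hk => ?_
  rw [show n + 1 - k - 1 = n - k - 1 + 1 by have := mem_range.1 hk; omega, pow_succ]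
  ring

theorem stmt_0_general (n : ℕ) (s x : ℂ) :
    ∑ k ∈ Finset.range (n + 1), genChoose (s + n) k * x ^ k =
      (1 + x) ^ n + s * ∑ k ∈ Finset.range n,
        genChoose (s + k) k / (k + 1) * x ^ (k + 1) * (1 + x) ^ (n - k - 1) := by
  induction n with
  | zero => simp [genChoose_zero_right]
  | succ n ih =>
    calc ∑ k ∈ range (n + 1 + 1), genChoose (s + (n + 1 : ℕ)) k * x ^ k
        = (1 + x) * ∑ k ∈ range (n + 1), genChoose (s + n) k * x ^ k
            + s * genChoose (s + n) n / (n + 1) * x ^ (n + 1) := by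
          rw [Nat.cast_succ, ← add_assoc, sum_range_succ_genChoose_add_one_mul_pow,
            genChoose_add_natCast_succ]
      _ = _ := by
          rw [ih, sum_range_succ_mul_pow_sub_one
            (fun k => genChoose (s + k) k / (k + 1) * x ^ (k + 1)), pow_succ]
          ring

theorem stmt_0 (n : ℕ) (hn : 0 < n) (s x : ℂ) :
    ∑ k ∈ Finset.range (n + 1), genChoose (s + n) k * x ^ k =
      (1 + x) ^ n + s * ∑ k ∈ Finset.range n,
        genChoose (s + k) k / (k + 1) * x ^ (k + 1) * (1 + x) ^ (n - k - 1) :=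
  stmt_0_general n s x
end

section
/- Let n be a positive integer and let s be a complex number such that s + j ≠ 0 for j = 1, …, n. Then for every complex number x: ∑_{k=1}^{n} C(s+n, k) · (∑_{j=0}^{k-1} 1/(s+n-j)) · x^k = ∑_{k=0}^{n-1} (C(s+k, k)/(k+1)) · (1 + s · ∑_{j=1}^{k} 1/(s+j)) · x^{k+1} · (1+x)^{n-k-1}. -/
/-!
Let `F_m(x) = ∑_{k ≤ m} C(t,k) (∑_{j<k} 1/(t-j)) x^k` with `t = s + m`. Pascal's rule and
`∑_{j<k+1} 1/(t+1-j) = 1/(t+1) + ∑_{j<k} 1/(t-j)` show that the coefficients of `F_{m+1}` are those of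
`(1+x) F_m`, except that at `x^{m+1}` an extra `c_m`, the coefficient of the right-hand side, appears.
Unrolling `F_{m+1} = (1+x) F_m + c_m x^{m+1}` from `F_0 = 0` gives the identity.
-/

open Finset

lemma genChoose_succ_mul (t : ℂ) (k : ℕ) :
    genChoose t (k + 1) * (k + 1) = genChoose t k * (t - k) := by
  have hk : ((k + 1).factorial : ℂ) ≠ 0 := by exact_mod_cast (k + 1).factorial_ne_zero
  simp only [genChoose, prod_range_succ, Nat.factorial_succ, Nat.cast_mul] at hk ⊢
  field_simp
  push_cast
  ring

lemma genChoose_add_one_succ_mul (t : ℂ) (k : ℕ) :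
    genChoose (t + 1) (k + 1) * (k + 1) = (t + 1) * genChoose t k := by
  have hk : ((k + 1).factorial : ℂ) ≠ 0 := by exact_mod_cast (k + 1).factorial_ne_zero
  have hprod : ∏ i ∈ range (k + 1), (t + 1 - i) = (t + 1) * ∏ i ∈ range k, (t - i) := by
    rw [prod_range_succ', mul_comm]
    push_cast
    simp only [add_sub_add_right_eq_sub, sub_zero]
  simp only [genChoose, hprod, Nat.factorial_succ, Nat.cast_mul] at hk ⊢
  field_simp
  push_cast
  ring

lemma genChoose_add_one_succ (t : ℂ) (k : ℕ) :
    genChoose (t + 1) (k + 1) = genChoose t (k + 1) + genChoose t k := by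
  have hk : (k + 1 : ℂ) ≠ 0 := by exact_mod_cast k.succ_ne_zero
  apply mul_right_cancel₀ hk
  linear_combination genChoose_add_one_succ_mul t k - genChoose_succ_mul t k

noncomputable def descRecipSum (t : ℂ) (k : ℕ) : ℂ := ∑ j ∈ range k, 1 / (t - j)

lemma descRecipSum_succ (t : ℂ) (k : ℕ) :
    descRecipSum t (k + 1) = descRecipSum t k + 1 / (t - k) :=
  sum_range_succ _ _

lemma descRecipSum_add_one_succ (t : ℂ) (k : ℕ) :
    descRecipSum (t + 1) (k + 1) = 1 / (t + 1) + descRecipSum t k := by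
  rw [descRecipSum, sum_range_succ', add_comm]
  push_cast
  simp only [add_sub_add_right_eq_sub, sub_zero, descRecipSum]

lemma descRecipSum_add_natCast_self (s : ℂ) (n : ℕ) :
    descRecipSum (s + n) n = ∑ j ∈ Icc 1 n, 1 / (s + j) := by
  induction n with
  | zero => simp [descRecipSum]
  | succ n ih =>
    rw [sum_Icc_succ_top (by omega), ← ih, Nat.cast_succ, ← add_assoc,
      descRecipSum_add_one_succ, add_comm]

lemma genChoose_mul_descRecipSum_add_one_succ (t : ℂ) (k : ℕ) (ht : t + 1 ≠ 0) :
    genChoose (t + 1) (k + 1) * descRecipSum (t + 1) (k + 1) =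
      genChoose t k * descRecipSum t k +
        (genChoose t (k + 1) * descRecipSum t k + genChoose t k / (k + 1)) := by
  have hk : (k + 1 : ℂ) ≠ 0 := by exact_mod_cast k.succ_ne_zero
  have hC : genChoose (t + 1) (k + 1) / (t + 1) = genChoose t k / (k + 1) := by
    rw [div_eq_div_iff ht hk, genChoose_add_one_succ_mul, mul_comm]
  rw [descRecipSum_add_one_succ, ← hC, genChoose_add_one_succ]
  ring

lemma genChoose_succ_mul_descRecipSum_add (t : ℂ) (k : ℕ) (htk : t - k ≠ 0) :
    genChoose t (k + 1) * descRecipSum t k + genChoose t k / (k + 1) =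
      genChoose t (k + 1) * descRecipSum t (k + 1) := by
  have hk : (k + 1 : ℂ) ≠ 0 := by exact_mod_cast k.succ_ne_zero
  have hC : genChoose t k / (k + 1) = genChoose t (k + 1) * (1 / (t - k)) := by
    rw [mul_one_div, div_eq_div_iff hk htk, genChoose_succ_mul]
  rw [descRecipSum_succ, hC]
  ring

/-- Here `s = 0` is allowed: the factor `s` of `C(s+m, m+1)` replaces the term `1/(s+m-m)`. -/
lemma genChoose_succ_mul_descRecipSum_add_self (s : ℂ) (m : ℕ) :
    genChoose (s + m) (m + 1) * descRecipSum (s + m) m + genChoose (s + m) m / (m + 1) =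
      genChoose (s + m) m / (m + 1) * (1 + s * ∑ j ∈ Icc 1 m, 1 / (s + j)) := by
  have hm : (m + 1 : ℂ) ≠ 0 := by exact_mod_cast m.succ_ne_zero
  have hC : genChoose (s + m) (m + 1) = genChoose (s + m) m / (m + 1) * s := by
    rw [div_mul_eq_mul_div, eq_div_iff hm, genChoose_succ_mul, add_sub_cancel_right]
  rw [hC, descRecipSum_add_natCast_self]
  ring

lemma eq_sum_of_succ_eq_mul_add {R : Type*} [CommSemiring R] {F b : ℕ → R} {a : R} {n : ℕ}
    (h0 : F 0 = 0) (h : ∀ m < n, F (m + 1) = a * F m + b m) :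
    F n = ∑ k ∈ range n, b k * a ^ (n - k - 1) := by
  induction n with
  | zero => simpa using h0
  | succ n ih =>
    rw [h n n.lt_succ_self, ih fun m hm => h m (by omega), sum_range_succ, mul_sum,
      Nat.add_sub_cancel_left, Nat.sub_self, pow_zero, mul_one]
    congr 1
    refine sum_congr rfl fun k hk => ?_
    rw [show n + 1 - k - 1 = n - k - 1 + 1 by have := mem_range.1 hk; omega, pow_succ]
    ring

noncomputable def binomialRecipSum (t x : ℂ) (m : ℕ) : ℂ :=
  ∑ k ∈ range (m + 1), genChoose t k * descRecipSum t k * x ^ k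

lemma binomialRecipSum_eq_sum_Icc (t x : ℂ) (m : ℕ) :
    binomialRecipSum t x m = ∑ k ∈ Icc 1 m, genChoose t k * descRecipSum t k * x ^ k := by
  rw [binomialRecipSum, range_eq_Ico, sum_eq_sum_Ico_succ_bot (by omega : 0 < m + 1),
    zero_add, Ico_add_one_right_eq_Icc]
  simp [descRecipSum]

lemma binomialRecipSum_eq_sum_range (t x : ℂ) (m : ℕ) :
    binomialRecipSum t x m =
      ∑ k ∈ range m, genChoose t (k + 1) * descRecipSum t (k + 1) * x ^ (k + 1) := by
  simp [binomialRecipSum, sum_range_succ', descRecipSum]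

lemma binomialRecipSum_succ (s x : ℂ) (m : ℕ) (hs : ∀ j ∈ Icc 1 (m + 1), s + (j : ℂ) ≠ 0) :
    binomialRecipSum (s + (m + 1 : ℕ)) x (m + 1) =
      (1 + x) * binomialRecipSum (s + m) x m +
        genChoose (s + m) m / (m + 1) * (1 + s * ∑ j ∈ Icc 1 m, 1 / (s + j)) * x ^ (m + 1) := by
  set t : ℂ := s + m
  have ht : t + 1 ≠ 0 := by simpa [t, add_assoc] using hs (m + 1) (by simp)
  have htk : ∀ k < m, t - k ≠ 0 := fun k hk => by
    simpa [t, Nat.cast_sub hk.le, add_sub_assoc] using hs (m - k) (by simp; omega)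
  set g : ℕ → ℂ := fun k => genChoose t (k + 1) * descRecipSum t k + genChoose t k / (k + 1)
  have hlow : ∑ k ∈ range m, g k * x ^ (k + 1) = binomialRecipSum t x m := by
    rw [binomialRecipSum_eq_sum_range]
    exact sum_congr rfl fun k hk => congrArg (· * x ^ (k + 1))
      (genChoose_succ_mul_descRecipSum_add t k (htk k (mem_range.1 hk)))
  have htop : g m = genChoose t m / (m + 1) * (1 + s * ∑ j ∈ Icc 1 m, 1 / (s + j)) :=
    genChoose_succ_mul_descRecipSum_add_self s m
  calc binomialRecipSum (s + (m + 1 : ℕ)) x (m + 1)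
      = ∑ k ∈ range (m + 1), (genChoose t k * descRecipSum t k + g k) * x ^ (k + 1) := by
        rw [show s + ((m + 1 : ℕ) : ℂ) = t + 1 by push_cast; ring, binomialRecipSum_eq_sum_range]
        exact sum_congr rfl fun k _ => by rw [genChoose_mul_descRecipSum_add_one_succ t k ht]
    _ = x * binomialRecipSum t x m + (∑ k ∈ range m, g k * x ^ (k + 1) + g m * x ^ (m + 1)) := by
        rw [← sum_range_succ, binomialRecipSum, mul_sum, ← sum_add_distrib]
        exact sum_congr rfl fun k _ => by ring
    _ = _ := by rw [hlow, htop]; ring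

theorem stmt_1_general (n : ℕ) (s : ℂ)
    (hs : ∀ j ∈ Finset.Icc 1 n, s + (j : ℂ) ≠ 0) (x : ℂ) :
    ∑ k ∈ Finset.Icc 1 n, genChoose (s + n) k *
        (∑ j ∈ Finset.range k, 1 / (s + n - j)) * x ^ k =
      ∑ k ∈ Finset.range n, genChoose (s + k) k / (k + 1) *
        (1 + s * ∑ j ∈ Finset.Icc 1 k, 1 / (s + j)) * x ^ (k + 1) * (1 + x) ^ (n - k - 1) := by
  have h := eq_sum_of_succ_eq_mul_add (F := fun m => binomialRecipSum (s + m) x m)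
    (a := 1 + x) (n := n) (by simp [binomialRecipSum, descRecipSum]) fun m hm =>
      binomialRecipSum_succ s x m fun j hj => hs j (by simp only [mem_Icc] at hj ⊢; omega)
  rwa [binomialRecipSum_eq_sum_Icc] at h

theorem stmt_1 (n : ℕ) (hn : 0 < n) (s : ℂ)
    (hs : ∀ j ∈ Finset.Icc 1 n, s + (j : ℂ) ≠ 0) (x : ℂ) :
    ∑ k ∈ Finset.Icc 1 n, genChoose (s + n) k *
        (∑ j ∈ Finset.range k, 1 / (s + n - j)) * x ^ k =
      ∑ k ∈ Finset.range n, genChoose (s + k) k / (k + 1) *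
        (1 + s * ∑ j ∈ Finset.Icc 1 k, 1 / (s + j)) * x ^ (k + 1) * (1 + x) ^ (n - k - 1) :=
  stmt_1_general n s hs x
end

section
/- Let n be a positive integer and let s be a complex number such that s + j ≠ 0 for j = 1, …, n. Then ∑_{k=0}^{n} (-1)^k · C(s+n, k) · [ (∑_{j=0}^{k-1} 1/(s+n-j))^2 − ∑_{j=0}^{k-1} 1/(s+n-j)^2 ] = ((-1)^n / n) · C(s+n-1, n-1) · [ 2 · ∑_{j=1}^{n-1} 1/(s+j) + s · ( (∑_{j=1}^{n-1} 1/(s+j))^2 − ∑_{j=1}^{n-1} 1/(s+j)^2 ) ]. -/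
open Polynomial Finset Nat

lemma prod_range_add_sub_eq_prod_Icc {R M : Type*} [Ring R] [CommMonoid M] (f : R → M) (s : R)
    (m : ℕ) : ∏ j ∈ range m, f (s + m - j) = ∏ j ∈ Icc 1 m, f (s + j) := by
  refine prod_nbij' (fun j => m - j) (fun j => m - j) ?_ ?_ ?_ ?_ ?_ <;>
    intro j hj <;> simp only [mem_range, mem_Icc] at hj ⊢
  · omega
  · omega
  · omega
  · omega
  · rw [Nat.cast_sub hj.le, add_sub_assoc']

section ProdXAddC

variable {ι K : Type*} [Field K] (S : Finset ι) (c : ι → K)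

lemma coeff_mul_X_add_C (p : K[X]) (r : K) (n : ℕ) :
    (p * (X + C r)).coeff (n + 1) = p.coeff n + p.coeff (n + 1) * r := by
  rw [mul_add, coeff_add, coeff_mul_X, coeff_mul_C]

lemma coeff_one_prod_X_add_C (hc : ∀ i ∈ S, c i ≠ 0) :
    (∏ i ∈ S, (X + C (c i))).coeff 1 = (∏ i ∈ S, c i) * ∑ i ∈ S, 1 / c i := by
  classical
  induction S using Finset.induction_on with
  | empty => simp [coeff_one]
  | insert a S ha ih =>
    have hca : c a ≠ 0 := hc a (mem_insert_self a S)
    rw [prod_insert ha, mul_comm (X + C (c a)), coeff_mul_X_add_C, coeff_zero_eq_eval_zero,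
      eval_prod, ih fun i hi => hc i (mem_insert_of_mem hi), prod_insert ha, sum_insert ha]
    simp only [eval_add, eval_X, eval_C, zero_add]
    linear_combination -(∏ i ∈ S, c i) * mul_one_div_cancel hca

lemma two_mul_coeff_two_prod_X_add_C (hc : ∀ i ∈ S, c i ≠ 0) :
    2 * (∏ i ∈ S, (X + C (c i))).coeff 2 =
      (∏ i ∈ S, c i) * ((∑ i ∈ S, 1 / c i) ^ 2 - ∑ i ∈ S, 1 / c i ^ 2) := by
  classical
  induction S using Finset.induction_on with
  | empty => simp [coeff_one]
  | insert a S ha ih =>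
    have hS : ∀ i ∈ S, c i ≠ 0 := fun i hi => hc i (mem_insert_of_mem hi)
    have hca : c a ≠ 0 := hc a (mem_insert_self a S)
    rw [prod_insert ha, mul_comm (X + C (c a)), coeff_mul_X_add_C,
      coeff_one_prod_X_add_C S c hS, prod_insert ha, sum_insert ha, sum_insert ha]
    linear_combination
      c a * ih hS - 2 * (∏ i ∈ S, c i) * (∑ i ∈ S, 1 / c i) * mul_one_div_cancel hca

end ProdXAddC

section ChoosePoly

variable {K : Type*} [Field K] [CharZero K]

/-- The polynomial `x ↦ C(x + a, k)`; its coefficients are the Taylor coefficients of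
`genChoose · k` at `a`. -/
noncomputable def choosePoly (a : K) (k : ℕ) : K[X] :=
  C (k ! : K)⁻¹ * ∏ j ∈ range k, (X + C (a - j))

lemma choosePoly_succ_succ (a : K) (k : ℕ) :
    choosePoly (a + 1) (k + 1) = choosePoly a k + choosePoly a (k + 1) := by
  have hfac : (k ! : K)⁻¹ = ((k + 1)! : K)⁻¹ * (k + 1) := by
    rw [factorial_succ]
    push_cast
    field_simp
  rw [choosePoly, choosePoly, choosePoly, prod_range_succ', prod_range_succ, hfac]
  simp only [cast_add, cast_one, cast_zero, sub_zero, add_sub_add_right_eq_sub, map_mul, map_add,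
    map_sub, map_natCast, map_one]
  ring

lemma sum_range_neg_one_pow_smul_choosePoly (a : K) (n : ℕ) :
    ∑ k ∈ range (n + 1), (-1 : K) ^ k • choosePoly (a + 1) k = (-1 : K) ^ n • choosePoly a n := by
  induction n with
  | zero => simp [choosePoly]
  | succ n ih =>
    rw [sum_range_succ, ih, choosePoly_succ_succ, pow_succ]
    module

end ChoosePoly

lemma two_mul_coeff_two_choosePoly (a : ℂ) (k : ℕ) (ha : ∀ j < k, a - j ≠ 0) :
    2 * (choosePoly a k).coeff 2 =
      genChoose a k * ((∑ j ∈ range k, 1 / (a - j)) ^ 2 - ∑ j ∈ range k, 1 / (a - j) ^ 2) := by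
  rw [choosePoly, coeff_C_mul, mul_left_comm,
    two_mul_coeff_two_prod_X_add_C _ _ fun j hj => ha j (mem_range.1 hj), genChoose]
  ring

lemma sum_range_neg_one_pow_mul_genChoose_add_one (a : ℂ) (n : ℕ)
    (ha : ∀ j < n, a + 1 - j ≠ 0) :
    ∑ k ∈ range (n + 1), (-1 : ℂ) ^ k * genChoose (a + 1) k *
        ((∑ j ∈ range k, 1 / (a + 1 - j)) ^ 2 - ∑ j ∈ range k, 1 / (a + 1 - j) ^ 2) =
      (-1 : ℂ) ^ n * (2 * (choosePoly a n).coeff 2) := by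
  trans ∑ k ∈ range (n + 1), 2 * ((-1 : ℂ) ^ k • choosePoly (a + 1) k).coeff 2
  · refine sum_congr rfl fun k hk => ?_
    have hk' := mem_range.1 hk
    rw [coeff_smul, smul_eq_mul, mul_left_comm,
      two_mul_coeff_two_choosePoly _ _ fun j hj => ha j (by omega), mul_assoc]
  · rw [← mul_sum, ← finsetSum_coeff, sum_range_neg_one_pow_smul_choosePoly, coeff_smul,
      smul_eq_mul, mul_left_comm]

lemma two_mul_coeff_two_choosePoly_add_nat (s : ℂ) (m : ℕ) (hs : ∀ j ∈ Icc 1 m, s + j ≠ 0) :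
    2 * (choosePoly (s + m) (m + 1)).coeff 2 =
      genChoose (s + m) m / (m + 1) *
        (2 * ∑ j ∈ Icc 1 m, 1 / (s + j) +
          s * ((∑ j ∈ Icc 1 m, 1 / (s + j)) ^ 2 - ∑ j ∈ Icc 1 m, 1 / (s + j) ^ 2)) := by
  have hG : genChoose (s + m) m = (∏ j ∈ Icc 1 m, (s + j)) / m ! := by
    rw [genChoose, ← prod_range_add_sub_eq_prod_Icc (fun z => z)]
  rw [choosePoly, prod_range_succ, prod_range_add_sub_eq_prod_Icc (fun z => X + C z),
    add_sub_cancel_right, coeff_C_mul, coeff_mul_X_add_C _ _ 1, one_add_one_eq_two,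
    coeff_one_prod_X_add_C _ _ hs, hG, factorial_succ, cast_mul, mul_inv, cast_succ]
  linear_combination (m + 1 : ℂ)⁻¹ * (m ! : ℂ)⁻¹ * s * two_mul_coeff_two_prod_X_add_C _ _ hs

theorem stmt_4 (n : ℕ) (hn : 0 < n) (s : ℂ)
    (hs : ∀ j ∈ Finset.Icc 1 n, s + (j : ℂ) ≠ 0) :
    ∑ k ∈ Finset.range (n + 1), (-1 : ℂ) ^ k * genChoose (s + n) k *
        ((∑ j ∈ Finset.range k, 1 / (s + n - j)) ^ 2 -
          ∑ j ∈ Finset.range k, 1 / (s + n - j) ^ 2) =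
      (-1 : ℂ) ^ n / n * genChoose (s + n - 1) (n - 1) *
        (2 * ∑ j ∈ Finset.Icc 1 (n - 1), 1 / (s + j) +
          s * ((∑ j ∈ Finset.Icc 1 (n - 1), 1 / (s + j)) ^ 2 -
            ∑ j ∈ Finset.Icc 1 (n - 1), 1 / (s + j) ^ 2)) := by
  obtain ⟨m, rfl⟩ := Nat.exists_eq_add_one_of_ne_zero hn.ne'
  have hnz (j : ℕ) (hj : j < m + 1) : s + m + 1 - j ≠ 0 := by
    rw [add_assoc, add_sub_assoc, ← cast_add_one, ← Nat.cast_sub hj.le]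
    exact hs (m + 1 - j) (mem_Icc.2 (by omega))
  rw [cast_add_one, ← add_assoc, sum_range_neg_one_pow_mul_genChoose_add_one _ _ hnz,
    two_mul_coeff_two_choosePoly_add_nat s m fun j hj => hs j (Icc_subset_Icc_right m.le_succ hj),
    add_sub_cancel_right, Nat.add_sub_cancel]
  ring
end

section
/- For every positive integer n and every complex number s: ∑_{k=1}^{n} C(s+n, k) · (-1)^{k-1}/k^2 = (H_n^2 + H_n^{(2)})/2 + s · ∑_{k=0}^{n-1} ( (-1)^k/(k+1) ) · C(s+k, k) · (H_n − H_k) / ((n−k) · binom(n, k)), where binom(n, k) is the ordinary binomial coefficient. -/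
/-!
Both sides are polynomials in `s` of degree at most `n`, so it suffices to prove the identity
for `s = 0, 1, …, n`. At `s = 0` it is the classical
`∑ (-1)^(k-1) C(n,k) / k² = (H_n² + H_n⁽²⁾) / 2`. Since `s C(s+k,k) / (k+1) = C(s+k,k+1)`,
Pascal's rule reduces the step `s ↦ s + 1` to
`∑_{j<n} (-1)^j C(x+n,j) / (j+1)² = ∑_{k<n} (-1)^k C(x+k,k) t(n,k)`, where
`t(n,k) = harmonicCoeff n k = (H_n - H_k) / ((n-k) C(n,k))`; this is again an identity between
polynomials of degree `< n`. At `x = -(r+1)` the left side is `H_{n-r} / (n-r)`, and by upper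
negation the right side is `∑_k C(r,k) t(n,k)`, which collapses to `t(n-r,0) = H_{n-r} / (n-r)`
because `t(n+1,k) + t(n+1,k+1) = t(n,k)`.
-/

open Finset Polynomial

theorem Ring.succ_mul_choose_succ {R : Type*} [CommRing R] [BinomialRing R] (r : R) (k : ℕ) :
    (k + 1) * Ring.choose r (k + 1) = (r - k) * Ring.choose r k := by
  have h := Ring.choose_smul_choose r (Nat.le_add_right k 1)
  rw [Nat.choose_succ_self_right, Nat.add_sub_cancel_left, Ring.choose_one_right,
    nsmul_eq_mul] at h
  push_cast at h
  rw [h, mul_comm]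

theorem Ring.choose_sub_sub_one {R : Type*} [CommRing R] [BinomialRing R] (r : R) (k : ℕ) :
    Ring.choose (k - 1 - r) k = (-1) ^ k * Ring.choose r k := by
  rw [show (k : R) - 1 - r = -(r + 1 - k) by ring, Ring.choose_neg,
    show r + 1 - k + k - 1 = r by ring, Units.smul_def, zsmul_eq_mul, Int.cast_negOnePow_natCast]

theorem Ring.choose_eq_inv_factorial_mul_eval_descPochhammer {K : Type*} [Field K] [CharZero K]
    (x : K) (k : ℕ) : Ring.choose x k = (k.factorial : K)⁻¹ * (descPochhammer K k).eval x := by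
  rw [Ring.choose_eq_smul, ← aeval_eq_smeval, aeval_def, ← eval_map, descPochhammer_map,
    smul_eq_mul]

theorem genChoose_eq_choose (s : ℂ) (k : ℕ) : genChoose s k = Ring.choose s k := by
  rw [Ring.choose_eq_inv_factorial_mul_eval_descPochhammer, genChoose,
    descPochhammer_eval_eq_prod_range, div_eq_inv_mul]

def IsPolyFunOfDegreeLT {K : Type*} [Field K] (d : ℕ) (f : K → K) : Prop :=
  ∃ p ∈ degreeLT K d, ∀ x, f x = p.eval x

namespace IsPolyFunOfDegreeLT

variable {K : Type*} [Field K] {d e : ℕ} {f g : K → K}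

theorem const (hd : 0 < d) (c : K) : IsPolyFunOfDegreeLT d fun _ => c :=
  ⟨C c, mem_degreeLT.mpr (degree_C_le.trans_lt (by exact_mod_cast hd)), fun _ => eval_C.symm⟩

theorem mono (hf : IsPolyFunOfDegreeLT d f) (hde : d ≤ e) : IsPolyFunOfDegreeLT e f :=
  let ⟨p, hp, hfp⟩ := hf; ⟨p, degreeLT_mono hde hp, hfp⟩

theorem add (hf : IsPolyFunOfDegreeLT d f) (hg : IsPolyFunOfDegreeLT d g) :
    IsPolyFunOfDegreeLT d fun x => f x + g x :=
  let ⟨p, hp, hfp⟩ := hf; let ⟨q, hq, hgq⟩ := hg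
  ⟨p + q, add_mem hp hq, fun x => by simp only [eval_add, hfp, hgq]⟩

theorem const_mul (hf : IsPolyFunOfDegreeLT d f) (c : K) :
    IsPolyFunOfDegreeLT d fun x => c * f x :=
  let ⟨p, hp, hfp⟩ := hf
  ⟨C c * p, C_mul' c p ▸ Submodule.smul_mem _ c hp,
    fun x => by simp only [eval_mul, eval_C, hfp]⟩

theorem mul_const (hf : IsPolyFunOfDegreeLT d f) (c : K) :
    IsPolyFunOfDegreeLT d fun x => f x * c := by
  simpa only [mul_comm _ c] using hf.const_mul c

theorem div_const (hf : IsPolyFunOfDegreeLT d f) (c : K) :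
    IsPolyFunOfDegreeLT d fun x => f x / c := by
  simpa only [div_eq_mul_inv] using hf.mul_const c⁻¹

theorem sum {ι : Type*} (s : Finset ι) {f : ι → K → K}
    (hf : ∀ i ∈ s, IsPolyFunOfDegreeLT d (f i)) :
    IsPolyFunOfDegreeLT d fun x => ∑ i ∈ s, f i x := by
  choose p hp hfp using hf
  refine ⟨∑ i ∈ s.attach, p i.1 i.2, Submodule.sum_mem _ fun i _ => hp i.1 i.2, fun x => ?_⟩
  rw [eval_finsetSum]
  exact (sum_attach s fun i => f i x).symm.trans (sum_congr rfl fun i _ => hfp i.1 i.2 x)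

theorem ext_of_injective (hf : IsPolyFunOfDegreeLT d f) (hg : IsPolyFunOfDegreeLT d g)
    {e : ℕ → K} (he : Function.Injective e) (hfg : ∀ m < d, f (e m) = g (e m)) : f = g := by
  obtain ⟨p, hp, hfp⟩ := hf
  obtain ⟨q, hq, hgq⟩ := hg
  have hcard : (#((range d).map ⟨e, he⟩) : WithBot ℕ) = d := by rw [card_map, card_range]
  have hpq : p = q := eq_of_degrees_lt_of_eval_finset_eq _
    (hcard ▸ mem_degreeLT.mp hp) (hcard ▸ mem_degreeLT.mp hq) <| by
      simpa [← hfp, ← hgq] using hfg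
  funext x
  rw [hfp, hgq, hpq]

end IsPolyFunOfDegreeLT

theorem isPolyFunOfDegreeLT_choose_add {K : Type*} [Field K] [CharZero K] (a : K) (k : ℕ) :
    IsPolyFunOfDegreeLT (k + 1) fun x => Ring.choose (x + a) k := by
  refine ⟨C (k.factorial : K)⁻¹ * (descPochhammer K k).comp (X + C a),
    mem_degreeLT.mpr ?_, fun x => ?_⟩
  · refine (degree_le_of_natDegree_le ((natDegree_C_mul_le _ _).trans ?_)).trans_lt
      (by exact_mod_cast k.lt_succ_self)
    rw [natDegree_comp, descPochhammer_natDegree, natDegree_X_add_C, mul_one]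
  · simp [Ring.choose_eq_inv_factorial_mul_eval_descPochhammer]

theorem sum_Icc_one_eq_sum_range {M : Type*} [AddCommMonoid M] (f : ℕ → M) (N : ℕ) :
    ∑ k ∈ Icc 1 N, f k = ∑ j ∈ range N, f (j + 1) := by
  rw [range_eq_Ico, sum_Ico_add', zero_add, Ico_add_one_right_eq_Icc]

theorem sum_Icc_choose_add_one {R : Type*} [CommRing R] [BinomialRing R] (x : R) (N : ℕ)
    (a : ℕ → R) :
    ∑ k ∈ Icc 1 N, (-1) ^ (k - 1) * Ring.choose (x + 1) k * a k =
      ∑ k ∈ Icc 1 N, (-1) ^ (k - 1) * Ring.choose x k * a k +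
        ∑ j ∈ range N, (-1) ^ j * Ring.choose x j * a (j + 1) := by
  simp only [sum_Icc_one_eq_sum_range, ← sum_add_distrib, Ring.choose_succ_succ,
    Nat.add_sub_cancel]
  exact sum_congr rfl fun j _ => by ring

def altChooseSum {R : Type*} [CommRing R] (a : ℕ → R) (n : ℕ) : R :=
  ∑ k ∈ Icc 1 n, (-1) ^ (k - 1) * (n.choose k : R) * a k

theorem altChooseSum_one {R : Type*} [CommRing R] {n : ℕ} (hn : n ≠ 0) :
    altChooseSum (fun _ => (1 : R)) n = 1 := by
  have halt := congrArg (Int.cast : ℤ → R) (Int.alternating_sum_range_choose_of_ne hn)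
  push_cast at halt
  rw [sum_range_succ'] at halt
  rw [altChooseSum, sum_Icc_one_eq_sum_range]
  simp only [Nat.add_sub_cancel, mul_one]
  simp only [pow_succ, mul_neg, mul_one, neg_mul, sum_neg_distrib, pow_zero,
    Nat.choose_zero_right, Nat.cast_one] at halt
  linear_combination -halt

theorem altChooseSum_succ {R : Type*} [CommRing R] [BinomialRing R] (a : ℕ → R) (n : ℕ) :
    altChooseSum a (n + 1) =
      altChooseSum a n + ∑ j ∈ range (n + 1), (-1) ^ j * (n.choose j : R) * a (j + 1) := by
  have hpascal := sum_Icc_choose_add_one (n : R) (n + 1) a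
  simp only [← Nat.cast_add_one, Ring.choose_natCast] at hpascal
  rw [altChooseSum, hpascal, altChooseSum, sum_Icc_succ_top (by omega), Nat.choose_succ_self,
    Nat.cast_zero, mul_zero, zero_mul, add_zero]

theorem sum_range_choose_mul_div_succ {K : Type*} [Field K] [CharZero K] (a : ℕ → K) (m : ℕ) :
    ∑ j ∈ range (m + 1), (-1) ^ j * (m.choose j : K) * a (j + 1) / (j + 1) =
      altChooseSum a (m + 1) / (m + 1) := by
  rw [altChooseSum, sum_Icc_one_eq_sum_range, sum_div]
  refine sum_congr rfl fun j _ => ?_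
  have habs : ((m : K) + 1) * m.choose j = (m + 1).choose (j + 1) * (j + 1) := by
    exact_mod_cast Nat.add_one_mul_choose_eq m j
  field_simp
  rw [Nat.add_sub_cancel]
  linear_combination (-1) ^ j * a (j + 1) * habs

theorem Hc_succ (n : ℕ) : Hc (n + 1) = Hc n + 1 / ((n : ℂ) + 1) := sum_range_succ _ _

theorem H2c_succ (n : ℕ) : H2c (n + 1) = H2c n + 1 / ((n : ℂ) + 1) ^ 2 := sum_range_succ _ _

theorem altChooseSum_one_div (n : ℕ) : altChooseSum (fun k => 1 / (k : ℂ)) n = Hc n := by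
  induction n with
  | zero => simp [altChooseSum, Hc]
  | succ n ih =>
    have := sum_range_choose_mul_div_succ (fun _ => (1 : ℂ)) n
    rw [altChooseSum_one n.succ_ne_zero] at this
    rw [altChooseSum_succ, ih, Hc_succ]
    push_cast
    simpa [div_eq_mul_inv] using this

theorem sum_range_choose_div_succ_sq (m : ℕ) :
    ∑ j ∈ range (m + 1), (-1) ^ j * (m.choose j : ℂ) / ((j : ℂ) + 1) ^ 2 =
      Hc (m + 1) / (m + 1) := by
  have := sum_range_choose_mul_div_succ (fun k => 1 / (k : ℂ)) m
  rw [altChooseSum_one_div] at this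
  push_cast at this
  simpa [div_eq_mul_inv, pow_two, mul_assoc] using this

theorem altChooseSum_one_div_sq (n : ℕ) :
    altChooseSum (fun k => 1 / (k : ℂ) ^ 2) n = (Hc n ^ 2 + H2c n) / 2 := by
  induction n with
  | zero => simp [altChooseSum, Hc, H2c]
  | succ n ih =>
    rw [altChooseSum_succ, ih]
    push_cast
    simp only [one_div, ← div_eq_mul_inv]
    rw [sum_range_choose_div_succ_sq, Hc_succ, H2c_succ]
    field_simp
    ring

theorem sum_choose_nsmul_of_pascal {M : Type*} [AddCommMonoid M] (a : ℕ → ℕ → M)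
    (ha : ∀ n k, k < n → a (n + 1) k + a (n + 1) (k + 1) = a n k) (r : ℕ) {m n : ℕ}
    (hmn : m < n) : ∑ k ∈ range (r + 1), r.choose k • a (n + r) (m + k) = a n m := by
  induction r with
  | zero => simp
  | succ r ih =>
    have hsplit := sum_choose_succ_nsmul (fun k _ => a (n + r + 1) (m + k)) r
    rw [← add_assoc, hsplit, ← ih, ← sum_add_distrib]
    refine sum_congr rfl fun k hk => ?_
    rw [← smul_add, ← add_assoc m k 1, ha _ _ (by grind)]

noncomputable def harmonicCoeff (n k : ℕ) : ℂ :=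
  (Hc n - Hc k) / (((n : ℂ) - k) * (n.choose k : ℂ))

theorem harmonicCoeff_succ_add_harmonicCoeff_succ_succ {n k : ℕ} (hk : k < n) :
    harmonicCoeff (n + 1) k + harmonicCoeff (n + 1) (k + 1) = harmonicCoeff n k := by
  have hnk : (n : ℂ) - k ≠ 0 := sub_ne_zero.mpr (by exact_mod_cast hk.ne')
  have hnk' : (n : ℂ) + 1 - k ≠ 0 := sub_ne_zero.mpr (by norm_cast; omega)
  have hchoose : ((n + 1).choose k : ℂ) = (n + 1) * n.choose k / (n + 1 - k) := by
    have h : ((n.choose k * (n + 1) : ℕ) : ℂ) = ((n + 1).choose k * (n + 1 - k) : ℕ) :=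
      congrArg _ (Nat.choose_mul_succ_eq n k)
    push_cast [Nat.cast_sub (by omega : k ≤ n + 1)] at h
    rw [eq_div_iff hnk']
    linear_combination -h
  have hchoose_succ : ((n + 1).choose (k + 1) : ℂ) = (n + 1) * n.choose k / (k + 1) := by
    rw [eq_div_iff (Nat.cast_add_one_ne_zero k)]
    exact_mod_cast (Nat.add_one_mul_choose_eq n k).symm
  have hB : (n.choose k : ℂ) ≠ 0 := by exact_mod_cast (Nat.choose_pos hk.le).ne'
  simp only [harmonicCoeff, hchoose, hchoose_succ, Hc_succ]
  push_cast
  rw [add_sub_add_right_eq_sub]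
  field_simp
  ring

theorem harmonicCoeff_zero_right (n : ℕ) : harmonicCoeff n 0 = Hc n / n := by
  simp [harmonicCoeff, Hc]

theorem sum_choose_mul_harmonicCoeff (m r : ℕ) :
    ∑ k ∈ range (m + 1 + r), (r.choose k : ℂ) * harmonicCoeff (m + 1 + r) k =
      Hc (m + 1) / (m + 1) := by
  rw [← sum_subset (range_subset_range.mpr (by omega : r + 1 ≤ m + 1 + r)) fun k _ hk => by
    rw [Nat.choose_eq_zero_of_lt (by simpa using hk), Nat.cast_zero, zero_mul]]
  have := sum_choose_nsmul_of_pascal harmonicCoeff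
    (fun _ _ => harmonicCoeff_succ_add_harmonicCoeff_succ_succ) r (Nat.succ_pos m)
  simpa [harmonicCoeff_zero_right] using this

theorem sum_choose_div_succ_sq_eq_sum_harmonicCoeff (n : ℕ) (x : ℂ) :
    ∑ j ∈ range n, (-1) ^ j * Ring.choose (x + n) j / ((j : ℂ) + 1) ^ 2 =
      ∑ k ∈ range n, (-1) ^ k * Ring.choose (x + k) k * harmonicCoeff n k := by
  have hL : IsPolyFunOfDegreeLT n fun x : ℂ =>
      ∑ j ∈ range n, (-1) ^ j * Ring.choose (x + n) j / ((j : ℂ) + 1) ^ 2 :=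
    .sum _ fun j hj => (((isPolyFunOfDegreeLT_choose_add _ j).const_mul _).div_const _).mono
      (by grind)
  have hR : IsPolyFunOfDegreeLT n fun x : ℂ =>
      ∑ k ∈ range n, (-1) ^ k * Ring.choose (x + k) k * harmonicCoeff n k :=
    .sum _ fun k hk => (((isPolyFunOfDegreeLT_choose_add _ k).const_mul _).mul_const _).mono
      (by grind)
  refine congrFun (hL.ext_of_injective hR (e := fun r : ℕ => -((r : ℂ) + 1))
    (fun a b h => by simpa using h) fun r hr => ?_) x
  obtain ⟨m, rfl⟩ : ∃ m, n = m + 1 + r := ⟨n - 1 - r, by omega⟩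
  trans Hc (m + 1) / (m + 1)
  · calc _ = ∑ j ∈ range (m + 1 + r), (-1) ^ j * (m.choose j : ℂ) / ((j : ℂ) + 1) ^ 2 := by
          refine sum_congr rfl fun j _ => ?_
          rw [show -((r : ℂ) + 1) + ((m + 1 + r : ℕ) : ℂ) = (m : ℂ) by push_cast; ring,
            Ring.choose_natCast]
      _ = ∑ j ∈ range (m + 1), (-1) ^ j * (m.choose j : ℂ) / ((j : ℂ) + 1) ^ 2 := by
          refine (sum_subset (range_subset_range.mpr (by omega)) fun j _ hj => ?_).symm
          rw [Nat.choose_eq_zero_of_lt (by simpa using hj), Nat.cast_zero, mul_zero, zero_div]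
      _ = _ := sum_range_choose_div_succ_sq m
  · rw [← sum_choose_mul_harmonicCoeff m r]
    refine sum_congr rfl fun k _ => ?_
    rw [show -((r : ℂ) + 1) + k = k - 1 - r by ring, Ring.choose_sub_sub_one, Ring.choose_natCast,
      ← mul_assoc, ← mul_pow]
    simp

theorem sum_Icc_choose_div_sq_add_one (n : ℕ) (x : ℂ) :
    ∑ k ∈ Icc 1 n, Ring.choose (x + 1 + n) k * (-1) ^ (k - 1) / (k : ℂ) ^ 2 =
      ∑ k ∈ Icc 1 n, Ring.choose (x + n) k * (-1) ^ (k - 1) / (k : ℂ) ^ 2 +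
        ∑ j ∈ range n, (-1) ^ j * Ring.choose (x + n) j / ((j : ℂ) + 1) ^ 2 := by
  rw [add_right_comm x 1]
  convert sum_Icc_choose_add_one (x + n) n fun k => 1 / (k : ℂ) ^ 2 using 1
  · exact sum_congr rfl fun k _ => by ring
  · push_cast
    congr 1 <;> exact sum_congr rfl fun k _ => by ring

theorem sum_harmonicCoeff_mul_choose_add_one (n : ℕ) (x : ℂ) :
    ∑ k ∈ range n, (-1) ^ k * harmonicCoeff n k * Ring.choose (x + 1 + k) (k + 1) =
      ∑ k ∈ range n, (-1) ^ k * harmonicCoeff n k * Ring.choose (x + k) (k + 1) +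
        ∑ k ∈ range n, (-1) ^ k * Ring.choose (x + k) k * harmonicCoeff n k := by
  rw [← sum_add_distrib]
  refine sum_congr rfl fun k _ => ?_
  rw [add_right_comm, Ring.choose_succ_succ]
  ring

theorem sum_Icc_choose_div_sq_eq (n : ℕ) (x : ℂ) :
    ∑ k ∈ Icc 1 n, Ring.choose (x + n) k * (-1) ^ (k - 1) / (k : ℂ) ^ 2 =
      (Hc n ^ 2 + H2c n) / 2 +
        ∑ k ∈ range n, (-1) ^ k * harmonicCoeff n k * Ring.choose (x + k) (k + 1) := by
  have hF : IsPolyFunOfDegreeLT (n + 1) fun x : ℂ =>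
      ∑ k ∈ Icc 1 n, Ring.choose (x + n) k * (-1) ^ (k - 1) / (k : ℂ) ^ 2 :=
    .sum _ fun k hk => (((isPolyFunOfDegreeLT_choose_add _ k).mul_const _).div_const _).mono
      (by grind)
  have hG : IsPolyFunOfDegreeLT (n + 1) fun x : ℂ => (Hc n ^ 2 + H2c n) / 2 +
      ∑ k ∈ range n, (-1) ^ k * harmonicCoeff n k * Ring.choose (x + k) (k + 1) :=
    (IsPolyFunOfDegreeLT.const n.succ_pos _).add <| .sum _ fun k hk =>
      ((isPolyFunOfDegreeLT_choose_add _ (k + 1)).const_mul _).mono (by grind)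
  refine congrFun (hF.ext_of_injective hG Nat.cast_injective fun m hm => ?_) x
  induction m with
  | zero =>
    simp only [Nat.cast_zero, zero_add, Ring.choose_natCast, Nat.choose_succ_self, mul_zero,
      sum_const_zero, add_zero, ← altChooseSum_one_div_sq, altChooseSum]
    exact sum_congr rfl fun k _ => by ring
  | succ m ih =>
    push_cast
    rw [sum_Icc_choose_div_sq_add_one, sum_harmonicCoeff_mul_choose_add_one, ih (by omega),
      sum_choose_div_succ_sq_eq_sum_harmonicCoeff, add_assoc]

theorem stmt_8_general (n : ℕ) (s : ℂ) :
    ∑ k ∈ Finset.Icc 1 n, genChoose (s + n) k * (-1 : ℂ) ^ (k - 1) / (k : ℂ) ^ 2 =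
      (Hc n ^ 2 + H2c n) / 2 + s * ∑ k ∈ Finset.range n,
        (-1 : ℂ) ^ k / ((k : ℂ) + 1) * genChoose (s + k) k *
          (Hc n - Hc k) / (((n : ℂ) - k) * (Nat.choose n k : ℂ)) := by
  simp only [genChoose_eq_choose]
  rw [sum_Icc_choose_div_sq_eq, mul_sum]
  congr 1
  refine sum_congr rfl fun k _ => ?_
  have habs : Ring.choose (s + k) (k + 1) = s * Ring.choose (s + k) k / (k + 1) := by
    rw [eq_div_iff (Nat.cast_add_one_ne_zero k), mul_comm, Ring.succ_mul_choose_succ,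
      add_sub_cancel_right]
  rw [harmonicCoeff, habs]
  ring

theorem stmt_8 (n : ℕ) (hn : 0 < n) (s : ℂ) :
    ∑ k ∈ Finset.Icc 1 n, genChoose (s + n) k * (-1 : ℂ) ^ (k - 1) / (k : ℂ) ^ 2 =
      (Hc n ^ 2 + H2c n) / 2 + s * ∑ k ∈ Finset.range n,
        (-1 : ℂ) ^ k / ((k : ℂ) + 1) * genChoose (s + k) k *
          (Hc n - Hc k) / (((n : ℂ) - k) * (Nat.choose n k : ℂ)) :=
  stmt_8_general n s
end

section
/- For every positive integer n: ∑_{k=1}^{n} (binom(2k, k) / 4^k) · (2·H_{2k} − H_k) = ((2n+1) / 4^n) · binom(2n, n) · (2·H_{2n} − H_n − 4n/(2n+1)), as an identity of rational numbers. -/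
/-- The `n`-th harmonic number as a rational number. -/
def Hq (n : ℕ) : ℚ := ∑ i ∈ Finset.range n, 1 / (i + 1)

/-- The `n`-th generalized harmonic number of order 2 as a rational number. -/
def H2q (n : ℕ) : ℚ := ∑ i ∈ Finset.range n, 1 / ((i : ℚ) + 1) ^ 2

/-!
The closed form vanishes at `n = 0` and its increment from `n` to `n + 1` is the `(n + 1)`-st
summand; this is a rational-function identity once `binom(2n+2, n+1) = 2(2n+1)/(n+1) · binom(2n, n)`
and the recurrences of `H_n` and `H_{2n}` are substituted.
-/

open Finset

lemma Hq_succ (n : ℕ) : Hq (n + 1) = Hq n + 1 / ((n : ℚ) + 1) := by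
  simp [Hq, sum_range_succ]

lemma Hq_two_mul_succ (n : ℕ) :
    Hq (2 * (n + 1)) = Hq (2 * n) + 1 / (2 * (n : ℚ) + 1) + 1 / (2 * (n : ℚ) + 2) := by
  rw [show 2 * (n + 1) = 2 * n + 1 + 1 by ring, Hq_succ, Hq_succ]
  push_cast
  ring

lemma cast_choose_two_mul_succ (n : ℕ) :
    ((2 * (n + 1)).choose (n + 1) : ℚ) = 2 * (2 * n + 1) / (n + 1) * (2 * n).choose n := by
  have h : ((n : ℚ) + 1) * (2 * (n + 1)).choose (n + 1) = 2 * (2 * n + 1) * (2 * n).choose n := by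
    exact_mod_cast Nat.succ_mul_centralBinom_succ n
  field_simp
  linear_combination h

def centralBinomHarmonicClosedForm (n : ℕ) : ℚ :=
  (2 * (n : ℚ) + 1) / 4 ^ n * ((2 * n).choose n : ℚ) *
    (2 * Hq (2 * n) - Hq n - 4 * (n : ℚ) / (2 * (n : ℚ) + 1))

lemma centralBinomHarmonicClosedForm_succ_sub (n : ℕ) :
    centralBinomHarmonicClosedForm (n + 1) - centralBinomHarmonicClosedForm n =
      ((2 * (n + 1)).choose (n + 1) : ℚ) / 4 ^ (n + 1) * (2 * Hq (2 * (n + 1)) - Hq (n + 1)) := by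
  simp only [centralBinomHarmonicClosedForm]
  rw [cast_choose_two_mul_succ, Hq_two_mul_succ, Hq_succ, pow_succ]
  push_cast
  field_simp
  ring

theorem stmt_12_general (n : ℕ) :
    ∑ k ∈ Finset.Icc 1 n, (Nat.choose (2 * k) k : ℚ) / 4 ^ k * (2 * Hq (2 * k) - Hq k) =
      (2 * (n : ℚ) + 1) / 4 ^ n * (Nat.choose (2 * n) n : ℚ) *
        (2 * Hq (2 * n) - Hq n - 4 * (n : ℚ) / (2 * (n : ℚ) + 1)) := by
  change _ = centralBinomHarmonicClosedForm n
  induction n with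
  | zero => simp [centralBinomHarmonicClosedForm, Hq]
  | succ n ih =>
    rw [sum_Icc_succ_top (by omega), ih, ← centralBinomHarmonicClosedForm_succ_sub]
    ring

theorem stmt_12 (n : ℕ) (hn : 0 < n) :
    ∑ k ∈ Finset.Icc 1 n, (Nat.choose (2 * k) k : ℚ) / 4 ^ k * (2 * Hq (2 * k) - Hq k) =
      (2 * (n : ℚ) + 1) / 4 ^ n * (Nat.choose (2 * n) n : ℚ) *
        (2 * Hq (2 * n) - Hq n - 4 * (n : ℚ) / (2 * (n : ℚ) + 1)) :=
  stmt_12_general n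
end

section
/- For all positive integers m and n: ∑_{k=0}^{n} (-1)^k · binom(mn, k) · H_{mn−k} = ((-1)^n / m) · binom(mn, n) · ( (m−1) · H_{(m−1)n} − 1/(mn) ), as an identity of rational numbers. -/
/-!
The alternating partial sums `∑_{k ≤ n} (-1)^k C(N,k) H_{N-k}` have a closed form for every
cut-off `n ≤ N`, proved by induction on `n` from `C(N,n+1) (n+1) = C(N,n) (N-n)` and
`H_{N-n} = H_{N-n-1} + 1/(N-n)`. The theorem is the case `N = m n`, where `N - n = (m-1) n`.
-/

open Finset

theorem alternating_sum_range_choose_mul_Hq_sub {N n : ℕ} (h : n ≤ N) :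
    ∑ k ∈ range (n + 1), (-1 : ℚ) ^ k * (N.choose k : ℚ) * Hq (N - k) =
      (-1 : ℚ) ^ n * (N.choose n : ℚ) * (((N : ℚ) - n) / N * Hq (N - n) - n / (N : ℚ) ^ 2) := by
  induction n with
  | zero =>
    rcases N.eq_zero_or_pos with rfl | hN
    · simp [Hq]
    · simp [hN.ne']
  | succ n ih =>
    have hN : (N : ℚ) ≠ 0 := Nat.cast_ne_zero.2 (by omega)
    have hNn : (N : ℚ) - n ≠ 0 := sub_ne_zero.2 (by norm_cast; omega)
    have hchoose : (N.choose (n + 1) : ℚ) = N.choose n * ((N : ℚ) - n) / (n + 1) := by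
      rw [eq_div_iff (by positivity), ← Nat.cast_sub (by omega)]
      exact_mod_cast Nat.choose_succ_right_eq N n
    have hH : Hq (N - n) = Hq (N - (n + 1)) + 1 / ((N : ℚ) - n) := by
      rw [show N - n = N - (n + 1) + 1 by omega, Hq_succ, Nat.cast_sub (by omega)]
      push_cast
      ring_nf
    rw [sum_range_succ, ih (by omega), hH, hchoose]
    push_cast
    field_simp
    ring

theorem stmt_16 (m n : ℕ) (hm : 0 < m) (hn : 0 < n) :
    ∑ k ∈ Finset.range (n + 1), (-1 : ℚ) ^ k * (Nat.choose (m * n) k : ℚ) * Hq (m * n - k) =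
      (-1 : ℚ) ^ n / m * (Nat.choose (m * n) n : ℚ) *
        (((m : ℚ) - 1) * Hq ((m - 1) * n) - 1 / ((m : ℚ) * n)) := by
  rw [alternating_sum_range_choose_mul_Hq_sub (Nat.le_mul_of_pos_left n hm),
    show m * n - n = (m - 1) * n by rw [Nat.sub_mul, one_mul]]
  have hm0 : (m : ℚ) ≠ 0 := by positivity
  have hn0 : (n : ℚ) ≠ 0 := by positivity
  push_cast
  field_simp
end

section
/- For every positive integer n: ∑_{k=1}^{n} (-1)^k · H_k / (k · binom(n, k)) = (-1)^n · H_{n+1} / (n+1) + ∑_{k=1}^{n+1} (-1)^k / (k^2 · binom(n+1, k)), as an identity of rational numbers. -/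
/-!
Write `A n = ∑ (-1)^k H_k / (k C(n,k))` and `B n = ∑ (-1)^k / (k² C(n,k))`. The relation
`(n+1-k) C(n+1,k) = (n+1) C(n,k)` expresses `A (n+1) - A n` and `B (n+2) - B (n+1)` in terms of
the sums `∑ (-1)^k H_k / C(n,k)` and `∑ (-1)^k / (k C(n+1,k))`, where the factor `1/k` is gone, so
the identity follows by induction once those two sums are known in closed form. For them, the
reciprocal identity `1/C(n+1,k) + 1/C(n+1,k+1) = (n+2) / ((n+1) C(n,k))` rewrites `∑ g k / C(n,k)`
as a sum over `g k + g (k-1)`; for `g k = (-1)^k` this vanishes, and for `g k = (-1)^k H_k` it is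
`(-1)^k / k`.
-/

open Finset

lemma cast_choose_succ_mul_sub {R : Type*} [CommRing R] {n k : ℕ} (hk : k ≤ n + 1) :
    ((n + 1).choose k : R) * (n + 1 - k) = n.choose k * (n + 1) := by
  have h := congrArg (Nat.cast : ℕ → R) (Nat.choose_mul_succ_eq n k)
  push_cast [Nat.cast_sub hk] at h
  exact h.symm

lemma cast_choose_succ_succ_mul {R : Type*} [CommRing R] (n k : ℕ) :
    ((n + 1).choose (k + 1) : R) * (k + 1) = n.choose k * (n + 1) := by
  have h := congrArg (Nat.cast : ℕ → R) (Nat.add_one_mul_choose_eq n k)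
  push_cast at h
  linear_combination -h

section Field

variable {K : Type*} [Field K] [CharZero K]

lemma cast_choose_ne_zero {n k : ℕ} (hk : k ≤ n) : (n.choose k : K) ≠ 0 :=
  Nat.cast_ne_zero.mpr (Nat.choose_pos hk).ne'

lemma inv_choose_succ_add_inv_choose_succ_succ {n k : ℕ} (hk : k ≤ n) :
    (1 : K) / (n + 1).choose k + 1 / (n + 1).choose (k + 1) =
      (n + 2) / ((n + 1) * n.choose k) := by
  have h0 : (n.choose k : K) ≠ 0 := cast_choose_ne_zero hk
  have h1 : ((n + 1).choose k : K) ≠ 0 := cast_choose_ne_zero (by omega)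
  have h2 : ((n + 1).choose (k + 1) : K) ≠ 0 := cast_choose_ne_zero (by omega)
  field_simp
  linear_combination
    (-(n + 1).choose (k + 1) : K) * cast_choose_succ_mul_sub (R := K) (by omega : k ≤ n + 1) -
      ((n + 1).choose k : K) * cast_choose_succ_succ_mul (R := K) n k

lemma sum_div_mul_choose_succ (f : ℕ → K) (n : ℕ) :
    ∑ k ∈ Icc 1 (n + 1), f k / (k * (n + 1).choose k) =
      ∑ k ∈ Icc 1 n, f k / (k * n.choose k) - (∑ k ∈ Icc 1 n, f k / n.choose k) / (n + 1) +
        f (n + 1) / (n + 1) := by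
  have term (k) (hk : k ∈ Icc 1 n) :
      f k / (k * (n + 1).choose k) = f k / (k * n.choose k) - f k / n.choose k / (n + 1) := by
    obtain ⟨hk1, hkn⟩ := mem_Icc.mp hk
    have h0 : (n.choose k : K) ≠ 0 := cast_choose_ne_zero hkn
    have h1 : ((n + 1).choose k : K) ≠ 0 := cast_choose_ne_zero (by omega)
    have hk0 : (k : K) ≠ 0 := Nat.cast_ne_zero.mpr (by omega)
    field_simp
    linear_combination (-f k) * cast_choose_succ_mul_sub (R := K) (by omega : k ≤ n + 1)
  rw [sum_Icc_succ_top (by omega), sum_congr rfl term, sum_sub_distrib, sum_div]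
  simp

lemma sum_div_choose_eq (g : ℕ → K) (n : ℕ) :
    ∑ k ∈ Icc 1 n, g k / n.choose k =
      (n + 1) / (n + 2) *
        (∑ k ∈ Icc 1 (n + 1), (g k + g (k - 1)) / (n + 1).choose k - g 0 / (n + 1) -
          g (n + 1)) := by
  have term (k) (hk : k ∈ Icc 1 n) : g k / n.choose k =
      (n + 1) / (n + 2) * (g k / (n + 1).choose k + g k / (n + 1).choose (k + 1)) := by
    have h0 : (n.choose k : K) ≠ 0 := cast_choose_ne_zero (mem_Icc.mp hk).2
    have hn2 : (n : K) + 2 ≠ 0 := by exact_mod_cast (n + 1).succ_ne_zero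
    rw [show g k / (n + 1).choose k + g k / (n + 1).choose (k + 1) =
        g k * (1 / (n + 1).choose k + 1 / (n + 1).choose (k + 1)) by ring,
      inv_choose_succ_add_inv_choose_succ_succ (mem_Icc.mp hk).2]
    field_simp
  have shift : ∑ k ∈ Icc 1 (n + 1), g (k - 1) / (n + 1).choose k =
      g 0 / (n + 1) + ∑ k ∈ Icc 1 n, g k / (n + 1).choose (k + 1) := by
    rw [← map_add_right_Icc 0 n 1, sum_map, Icc_eq_cons_Ioc (by omega), sum_cons,
      ← Icc_add_one_left_eq_Ioc]
    simp
  rw [sum_congr rfl term, ← mul_sum, sum_add_distrib]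
  simp only [add_div, sum_add_distrib]
  rw [shift, sum_Icc_succ_top (by omega), Nat.choose_self]
  ring

lemma sum_neg_one_pow_div_choose (n : ℕ) :
    ∑ k ∈ Icc 1 n, (-1 : K) ^ k / n.choose k = ((n + 1) * (-1) ^ n - 1) / (n + 2) := by
  have cancel (k) (hk : k ∈ Icc 1 (n + 1)) :
      ((-1 : K) ^ k + (-1) ^ (k - 1)) / (n + 1).choose k = 0 := by
    obtain ⟨j, rfl⟩ := Nat.exists_eq_add_of_le' (mem_Icc.mp hk).1
    simp [pow_succ]
  rw [sum_div_choose_eq, sum_congr rfl cancel, sum_const_zero]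
  field_simp
  ring

lemma sum_neg_one_pow_div_mul_choose (n : ℕ) :
    ∑ k ∈ Icc 1 n, (-1 : K) ^ k / (k * n.choose k) = ((-1) ^ n - 1) / (n + 1) := by
  induction n with
  | zero => simp
  | succ m ih =>
    have hm1 : (m : K) + 1 ≠ 0 := by exact_mod_cast m.succ_ne_zero
    have hm2 : (m : K) + 2 ≠ 0 := by exact_mod_cast (m + 1).succ_ne_zero
    rw [sum_div_mul_choose_succ, ih, sum_neg_one_pow_div_choose, Nat.cast_succ, add_assoc,
      one_add_one_eq_two]
    field_simp
    ring

end Field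

lemma sum_neg_one_pow_mul_Hq_div_choose (n : ℕ) :
    ∑ k ∈ Icc 1 n, (-1 : ℚ) ^ k * Hq k / n.choose k =
      (n + 1) / (n + 2) * (((-1) ^ (n + 1) - 1) / (n + 2) + (-1) ^ n * Hq (n + 1)) := by
  have pair (k) (hk : k ∈ Icc 1 (n + 1)) :
      ((-1 : ℚ) ^ k * Hq k + (-1) ^ (k - 1) * Hq (k - 1)) / (n + 1).choose k =
        (-1) ^ k / (k * (n + 1).choose k) := by
    obtain ⟨j, rfl⟩ := Nat.exists_eq_add_of_le' (mem_Icc.mp hk).1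
    have hj : (j : ℚ) + 1 ≠ 0 := by positivity
    rw [Nat.add_sub_cancel, Hq_succ]
    push_cast
    field_simp
    ring
  rw [sum_div_choose_eq, sum_congr rfl pair, sum_neg_one_pow_div_mul_choose]
  push_cast
  simp only [Hq, range_zero, sum_empty, mul_zero, zero_div, sub_zero, pow_succ]
  ring

theorem stmt_17_general (n : ℕ) :
    ∑ k ∈ Finset.Icc 1 n, (-1 : ℚ) ^ k * Hq k / ((k : ℚ) * (Nat.choose n k : ℚ)) =
      (-1 : ℚ) ^ n * Hq (n + 1) / ((n : ℚ) + 1) +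
        ∑ k ∈ Finset.Icc 1 (n + 1),
          (-1 : ℚ) ^ k / ((k : ℚ) ^ 2 * (Nat.choose (n + 1) k : ℚ)) := by
  have sq_form (n : ℕ) : ∑ k ∈ Icc 1 n, (-1 : ℚ) ^ k / ((k : ℚ) ^ 2 * n.choose k) =
      ∑ k ∈ Icc 1 n, (-1 : ℚ) ^ k / k / (k * n.choose k) := by
    simp only [sq, div_div, mul_assoc]
  have lin_form (n : ℕ) : ∑ k ∈ Icc 1 n, (-1 : ℚ) ^ k / k / n.choose k =
      ∑ k ∈ Icc 1 n, (-1 : ℚ) ^ k / (k * n.choose k) := by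
    simp only [div_div]
  induction n with
  | zero => norm_num [Hq]
  | succ m ih =>
    rw [sum_div_mul_choose_succ, ih, sum_neg_one_pow_mul_Hq_div_choose, sq_form (m + 1 + 1),
      sum_div_mul_choose_succ (fun k => (-1 : ℚ) ^ k / k), ← sq_form, lin_form,
      sum_neg_one_pow_div_mul_choose, Hq_succ (m + 1)]
    push_cast
    field_simp
    ring

theorem stmt_17 (n : ℕ) (hn : 0 < n) :
    ∑ k ∈ Finset.Icc 1 n, (-1 : ℚ) ^ k * Hq k / ((k : ℚ) * (Nat.choose n k : ℚ)) =
      (-1 : ℚ) ^ n * Hq (n + 1) / ((n : ℚ) + 1) +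
        ∑ k ∈ Finset.Icc 1 (n + 1),
          (-1 : ℚ) ^ k / ((k : ℚ) ^ 2 * (Nat.choose (n + 1) k : ℚ)) :=
  stmt_17_general n
end
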